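/- arXiv:1609.09519 — 2 statements merged into one kernel-verified Lean document; each statement's English description precedes it below -/
import Mathlib

section
/- Let M̃ be a d×d matrix over the field K = HahnSeries ℚ ℂ with all entries nonzero, and suppose L(M̃) ∈ G(d,d). Then M̃ is invertible, every entry of M̃^{-1} is nonzero, and for all i,j ∈ {1,…,d}: V((M̃^{-1})_{ij}) = (V(M̃)^{⊗−1})_{ij}, i.e. V((M̃^{-1})_{ij}) = perm(V(M̃) with row j and column i deleted) − perm(V(M̃)). -/
open scoped BigOperators

/-- The set `G(n,d)` of *good coefficient matrices*: `C` is good if for every nonempty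
set `Ψ` of permutations of `{1,…,d}` and every injection `φ : {1,…,d} ↪ {1,…,n}`,
the signed sum `∑_{π∈Ψ} sign(π) ∏_k C_{φ(k),π(k)}` is nonzero. -/
def Good {n d : ℕ} (C : Matrix (Fin n) (Fin d) ℂ) : Prop :=
  ∀ Ψ : Finset (Equiv.Perm (Fin d)), Ψ.Nonempty → ∀ φ : Fin d ↪ Fin n,
    ∑ π ∈ Ψ, ((Equiv.Perm.sign π : ℤ) : ℂ) * ∏ k, C (φ k) (π k) ≠ 0

/-- Max-plus permanent of a rectangular real matrix (rows indexed by `κ`, columns by `ι`):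
the maximum over injections `φ` of the columns into the rows of `∑ j, A (φ j) j`. -/
noncomputable def mpPerm {ι κ : Type*} [Fintype ι] [Fintype κ] (A : Matrix κ ι ℝ) : ℝ :=
  ⨆ φ : ι ↪ κ, ∑ j, A (φ j) j

/-- The `i`-obligated max-plus permanent: maximum over injections whose image contains `i`. -/
noncomputable def mpPermOb {ι κ : Type*} [Fintype ι] [Fintype κ] (A : Matrix κ ι ℝ) (i : κ) : ℝ :=
  ⨆ φ : {φ : ι ↪ κ // ∃ j, φ j = i}, ∑ j, A (φ.1 j) j

/-- The set of optimal assignments of a max-plus matrix. -/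
def oas {ι κ : Type*} [Fintype ι] [Fintype κ] (A : Matrix κ ι ℝ) : Set (ι ↪ κ) :=
  {φ | ∑ j, A (φ j) j = mpPerm A}

/-- The max-plus permanent of a square matrix with row `r` and column `c` deleted. -/
noncomputable def mpPermDel {d : ℕ} (M : Matrix (Fin d) (Fin d) ℝ) (r c : Fin d) : ℝ :=
  mpPerm (M.submatrix (fun i : {i : Fin d // i ≠ r} => (i : Fin d))
                      (fun j : {j : Fin d // j ≠ c} => (j : Fin d)))

/-- The max-plus inverse of a square matrix:
`(M^{⊗-1})_{ij} = perm(M with row j and column i deleted) - perm(M)`. -/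
noncomputable def mpInv {d : ℕ} (M : Matrix (Fin d) (Fin d) ℝ) : Matrix (Fin d) (Fin d) ℝ :=
  fun i j => mpPermDel M j i - mpPerm M

/-- Max-plus statistical leverage scores: `p_i(A) = 2 (perm(A,i) - perm(A))`. -/
noncomputable def mpScore {n d : ℕ} (A : Matrix (Fin n) (Fin d) ℝ) (i : Fin n) : ℝ :=
  2 * (mpPermOb A i - mpPerm A)

/-- Statistical leverage scores of a complex matrix:
`p_i(A) = sup_{x, Ax ≠ 0} |(Ax)_i|² / ‖Ax‖₂²` (and `0` if the sup is over the empty set). -/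
noncomputable def levScore {n d : ℕ} (A : Matrix (Fin n) (Fin d) ℂ) (i : Fin n) : ℝ :=
  sSup {t : ℝ | ∃ x : Fin d → ℂ, A.mulVec x ≠ 0 ∧
    t = ‖A.mulVec x i‖ ^ 2 / ∑ k, ‖A.mulVec x k‖ ^ 2}

/-!
Expand `det M̃` and each entry of `adj M̃` by the Leibniz formula. Every term has order the sum of
the orders of its entries, so the order of the sum is at least the least such order `m`, and its
coefficient at `m` is the signed sum, over the permutations attaining `m`, of the products of
leading coefficients. For a cofactor these permutations all agree on the deleted column;
multiplying by the common leading coefficient there turns the sum into one that the genericity of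
`L(M̃)` keeps nonzero. Hence `V(det M̃) = perm V(M̃)`, `V((adj M̃)ᵢⱼ)` is the permanent of `V(M̃)`
without row `j` and column `i`, and `M̃⁻¹ = (det M̃)⁻¹ • adj M̃`.
-/

open Finset Equiv

namespace HahnSeries

variable {Γ R : Type*}

theorem orderTop_sum_eq [LinearOrder Γ] [AddCommMonoid R] {ι : Type*} (s : Finset ι)
    (f : ι → R⟦Γ⟧) {m : Γ} (hm : ∀ i ∈ s, ↑m ≤ (f i).orderTop)
    (hne : ∑ i ∈ s with (f i).orderTop = m, (f i).leadingCoeff ≠ 0) :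
    (∑ i ∈ s, f i).orderTop = m := by
  have hcoeff : (∑ i ∈ s, f i).coeff m = ∑ i ∈ s with (f i).orderTop = m, (f i).leadingCoeff := by
    rw [coeff_sum, sum_filter]
    refine sum_congr rfl fun i hi => ?_
    split_ifs with h
    · rw [leadingCoeff, h]
      rfl
    · exact coeff_eq_zero_of_lt_orderTop ((hm i hi).lt_of_ne' h)
  refine orderTop_eq_of_le (by rwa [mem_support, hcoeff]) fun q hq => ?_
  by_contra! hqm
  refine hq ?_
  rw [coeff_sum]
  exact sum_eq_zero fun i hi =>
    coeff_eq_zero_of_lt_orderTop ((WithTop.coe_lt_coe.2 hqm).trans_le (hm i hi))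

theorem ne_zero_of_orderTop_eq_coe [LinearOrder Γ] [Zero R] {x : R⟦Γ⟧} {g : Γ}
    (h : x.orderTop = g) : x ≠ 0 :=
  orderTop_ne_top.1 (h ▸ WithTop.coe_ne_top)

theorem order_eq_of_orderTop_eq_coe [LinearOrder Γ] [Zero Γ] [Zero R] {x : R⟦Γ⟧} {g : Γ}
    (h : x.orderTop = g) : x.order = g :=
  WithTop.coe_injective ((order_eq_orderTop_of_ne_zero (ne_zero_of_orderTop_eq_coe h)).trans h)

theorem order_inv [AddCommGroup Γ] [LinearOrder Γ] [IsOrderedAddMonoid Γ] [Field R]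
    {x : R⟦Γ⟧} (hx : x ≠ 0) : x⁻¹.order = -x.order :=
  eq_neg_of_add_eq_zero_right <| by
    rw [← order_mul hx (inv_ne_zero hx), mul_inv_cancel₀ hx, order_one]

section Domain

variable [AddCommMonoid Γ] [LinearOrder Γ] [IsOrderedCancelAddMonoid Γ] [CommRing R]

theorem orderTop_units_int_mul (ε : ℤˣ) (x : R⟦Γ⟧) :
    (((ε : ℤ) : R⟦Γ⟧) * x).orderTop = x.orderTop := by
  rcases Int.units_eq_one_or ε with rfl | rfl <;> simp

theorem leadingCoeff_units_int_mul (ε : ℤˣ) (x : R⟦Γ⟧) :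
    (((ε : ℤ) : R⟦Γ⟧) * x).leadingCoeff = (ε : ℤ) * x.leadingCoeff := by
  rcases Int.units_eq_one_or ε with rfl | rfl <;> simp [leadingCoeff_neg]

variable [IsDomain R]

theorem orderTop_prod {ι : Type*} (s : Finset ι) (f : ι → R⟦Γ⟧) :
    (∏ i ∈ s, f i).orderTop = ∑ i ∈ s, (f i).orderTop := by
  classical
  induction s using Finset.induction_on with
  | empty => simp
  | insert a s ha ih => rw [prod_insert ha, sum_insert ha, orderTop_mul, ih]

theorem leadingCoeff_prod {ι : Type*} (s : Finset ι) (f : ι → R⟦Γ⟧) :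
    (∏ i ∈ s, f i).leadingCoeff = ∏ i ∈ s, (f i).leadingCoeff := by
  classical
  induction s using Finset.induction_on with
  | empty => simp
  | insert a s ha ih => rw [prod_insert ha, prod_insert ha, leadingCoeff_mul, ih]

end Domain

end HahnSeries

section Permutations

variable {n R : Type*} [Fintype n] [DecidableEq n] [CommRing R]

theorem sum_sign_mul_prod_ne_zero_of_eqOn_compl (C : Matrix n n R)
    (hC : ∀ Ψ : Finset (Perm n), Ψ.Nonempty → ∑ σ ∈ Ψ, (Perm.sign σ : R) * ∏ k, C (σ k) k ≠ 0)
    {s : Finset n} {Ψ : Finset (Perm n)} (hΨ : Ψ.Nonempty)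
    (hagree : ∀ σ ∈ Ψ, ∀ τ ∈ Ψ, ∀ k ∉ s, σ k = τ k) :
    ∑ σ ∈ Ψ, (Perm.sign σ : R) * ∏ k ∈ s, C (σ k) k ≠ 0 := by
  obtain ⟨σ₀, hσ₀⟩ := hΨ
  have hfactor : ∑ σ ∈ Ψ, (Perm.sign σ : R) * ∏ k, C (σ k) k =
      (∏ k ∈ sᶜ, C (σ₀ k) k) * ∑ σ ∈ Ψ, (Perm.sign σ : R) * ∏ k ∈ s, C (σ k) k := by
    rw [mul_sum]
    refine sum_congr rfl fun σ hσ => ?_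
    have hcompl : ∏ k ∈ sᶜ, C (σ k) k = ∏ k ∈ sᶜ, C (σ₀ k) k :=
      prod_congr rfl fun k hk => by rw [hagree σ hσ σ₀ hσ₀ k (mem_compl.1 hk)]
    rw [← prod_mul_prod_compl s, hcompl]
    ring
  exact right_ne_zero_of_mul (hfactor ▸ hC Ψ ⟨σ₀, hσ₀⟩)

theorem Equiv.Perm.filter_apply_eq_nonempty (i j : n) :
    ({σ : Perm n | σ i = j} : Finset (Perm n)).Nonempty :=
  ⟨swap i j, by simp⟩

theorem Matrix.prod_updateRow_single_apply (M : Matrix n n R) (σ : Perm n) (i j : n) :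
    ∏ k, M.updateRow j (Pi.single i 1) (σ k) k =
      if σ i = j then ∏ k ∈ univ.erase i, M (σ k) k else 0 := by
  split_ifs with hσ
  · rw [← mul_prod_erase univ _ (mem_univ i), hσ]
    simp only [Matrix.updateRow_self, Pi.single_eq_same, one_mul]
    refine prod_congr rfl fun k hk => ?_
    rw [Matrix.updateRow_apply, if_neg fun h => (mem_erase.1 hk).1 (σ.injective (h.trans hσ.symm))]
  · refine prod_eq_zero (mem_univ (σ.symm j)) ?_
    have hne : σ.symm j ≠ i := fun h => hσ (by rw [← h, apply_symm_apply])
    simp [Pi.single_eq_of_ne hne]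

theorem Matrix.adjugate_apply_eq_sum_perm (M : Matrix n n R) (i j : n) :
    M.adjugate i j =
      ∑ σ : Perm n with σ i = j, (Perm.sign σ : R) * ∏ k ∈ univ.erase i, M (σ k) k := by
  simp only [Matrix.adjugate_apply, Matrix.det_apply', Matrix.prod_updateRow_single_apply,
    mul_ite, mul_zero, sum_ite, sum_const_zero, add_zero]

end Permutations

theorem Good.sum_sign_mul_prod_ne_zero {d : ℕ} {C : Matrix (Fin d) (Fin d) ℂ} (hC : Good C)
    (Ψ : Finset (Perm (Fin d))) (hΨ : Ψ.Nonempty) :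
    ∑ σ ∈ Ψ, (Perm.sign σ : ℂ) * ∏ k, C (σ k) k ≠ 0 := by
  convert hC (Ψ.map (Equiv.inv _).toEmbedding) (hΨ.map) (Function.Embedding.refl _) using 1
  rw [sum_map]
  refine sum_congr rfl fun σ _ => ?_
  simpa using Equiv.prod_comp σ fun k => C k (σ.symm k)

section HahnMatrix

open HahnSeries

variable {n Γ R : Type*} [Fintype n] [DecidableEq n]
  [AddCommMonoid Γ] [LinearOrder Γ] [IsOrderedCancelAddMonoid Γ] [CommRing R] [IsDomain R]

theorem orderTop_sum_sign_mul_prod (M : Matrix n n R⟦Γ⟧) (hM : ∀ a b, M a b ≠ 0)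
    (hL : ∀ Ψ : Finset (Perm n), Ψ.Nonempty →
      ∑ σ ∈ Ψ, (Perm.sign σ : R) * ∏ k, (M (σ k) k).leadingCoeff ≠ 0)
    {s : Finset n} {T : Finset (Perm n)} (hT : T.Nonempty)
    (hagree : ∀ σ ∈ T, ∀ τ ∈ T, ∀ k ∉ s, σ k = τ k) :
    (∑ σ ∈ T, (Perm.sign σ : R⟦Γ⟧) * ∏ k ∈ s, M (σ k) k).orderTop =
      ↑(T.inf' hT fun σ => ∑ k ∈ s, (M (σ k) k).order) := by
  set w := fun σ : Perm n => ∑ k ∈ s, (M (σ k) k).order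
  have horderTop : ∀ σ, ((Perm.sign σ : R⟦Γ⟧) * ∏ k ∈ s, M (σ k) k).orderTop = w σ := by
    intro σ
    rw [orderTop_units_int_mul, orderTop_prod, WithTop.coe_sum]
    exact sum_congr rfl fun k _ => (order_eq_orderTop_of_ne_zero (hM _ _)).symm
  obtain ⟨σ₀, hσ₀, hmin⟩ := exists_mem_eq_inf' hT w
  refine orderTop_sum_eq T _ (fun σ hσ => ?_) ?_
  · rw [horderTop]
    exact WithTop.coe_le_coe.2 (inf'_le w hσ)
  · simp only [leadingCoeff_units_int_mul, leadingCoeff_prod]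
    exact sum_sign_mul_prod_ne_zero_of_eqOn_compl (fun a b => (M a b).leadingCoeff) hL
      ⟨σ₀, mem_filter.2 ⟨hσ₀, by rw [horderTop, hmin]⟩⟩ fun σ hσ τ hτ =>
        hagree σ (mem_filter.1 hσ).1 τ (mem_filter.1 hτ).1

theorem orderTop_det (M : Matrix n n R⟦Γ⟧) (hM : ∀ a b, M a b ≠ 0)
    (hL : ∀ Ψ : Finset (Perm n), Ψ.Nonempty →
      ∑ σ ∈ Ψ, (Perm.sign σ : R) * ∏ k, (M (σ k) k).leadingCoeff ≠ 0) :
    M.det.orderTop = ↑(univ.inf' univ_nonempty fun σ : Perm n => ∑ k, (M (σ k) k).order) := by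
  rw [Matrix.det_apply']
  exact orderTop_sum_sign_mul_prod M hM hL univ_nonempty fun _ _ _ _ k hk => absurd (mem_univ k) hk

theorem orderTop_adjugate_apply (M : Matrix n n R⟦Γ⟧) (hM : ∀ a b, M a b ≠ 0)
    (hL : ∀ Ψ : Finset (Perm n), Ψ.Nonempty →
      ∑ σ ∈ Ψ, (Perm.sign σ : R) * ∏ k, (M (σ k) k).leadingCoeff ≠ 0) (i j : n) :
    (M.adjugate i j).orderTop = ↑(Finset.inf' _ (Perm.filter_apply_eq_nonempty i j) fun σ =>
      ∑ k ∈ univ.erase i, (M (σ k) k).order) := by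
  rw [Matrix.adjugate_apply_eq_sum_perm]
  refine orderTop_sum_sign_mul_prod M hM hL _ fun σ hσ τ hτ k hk => ?_
  rw [of_not_not (mt (mem_erase_of_ne_of_mem · (mem_univ k)) hk), (mem_filter.1 hσ).2,
    (mem_filter.1 hτ).2]

end HahnMatrix

section MaxPlus

theorem mpPerm_eq_sup'_perm {ι : Type*} [Fintype ι] [DecidableEq ι] (A : Matrix ι ι ℝ) :
    mpPerm A = univ.sup' univ_nonempty fun σ : Perm ι => ∑ j, A (σ j) j := by
  rw [sup'_univ_eq_ciSup]
  exact (Equiv.embeddingEquivOfFinite ι).iSup_congr fun _ => rfl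

variable {α : Type*} [Finite α] [DecidableEq α] {i j : α}

noncomputable def Function.Embedding.extendToPerm (φ : {b // b ≠ i} ↪ {a // a ≠ j}) : Perm α :=
  ((optionSubtypeNe i).symm.toEmbedding.trans
    (φ.optionMap.trans (optionSubtypeNe j).toEmbedding)).equivOfFiniteSelfEmbedding

@[simp]
theorem Function.Embedding.extendToPerm_apply_self (φ : {b // b ≠ i} ↪ {a // a ≠ j}) :
    φ.extendToPerm i = j := by
  simp [Function.Embedding.extendToPerm, Function.Embedding.equivOfFiniteSelfEmbedding]

@[simp]
theorem Function.Embedding.extendToPerm_apply_coe (φ : {b // b ≠ i} ↪ {a // a ≠ j})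
    (b : {b // b ≠ i}) : φ.extendToPerm b = φ b := by
  simp [Function.Embedding.extendToPerm, Function.Embedding.equivOfFiniteSelfEmbedding,
    optionSubtypeNe_symm_of_ne b.2]

theorem mpPermDel_eq_sup'_perm {d : ℕ} (A : Matrix (Fin d) (Fin d) ℝ) (i j : Fin d) :
    mpPermDel A j i = Finset.sup' _ (Perm.filter_apply_eq_nonempty i j) fun σ =>
      ∑ k ∈ univ.erase i, A (σ k) k := by
  let restrict (σ : Perm (Fin d)) (hσ : σ i = j) : {b // b ≠ i} ↪ {a // a ≠ j} :=
    σ.toEmbedding.subtypeMap fun _ hb h => hb (σ.injective (h.trans hσ.symm))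
  have : Nonempty ({b // b ≠ i} ↪ {a // a ≠ j}) := ⟨restrict (swap i j) (swap_apply_left i j)⟩
  have hsum (σ : Perm (Fin d)) :
      ∑ k ∈ univ.erase i, A (σ k) k = ∑ b : {b // b ≠ i}, A (σ b) b :=
    sum_subtype _ (by simp) _
  refine le_antisymm (ciSup_le fun φ => le_sup'_of_le _ (b := φ.extendToPerm) (by simp) ?_)
    (sup'_le _ _ fun σ hσ => le_ciSup_of_le (Set.finite_range _).bddAbove
      (restrict σ (mem_filter.1 hσ).2) ?_)
  · rw [hsum]
    simp
  · exact (hsum σ).le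

end MaxPlus

theorem Finset.sup'_ratCast_neg {α : Type*} (T : Finset α) (hT : T.Nonempty) (f : α → ℚ) :
    T.sup' hT (fun a => ((-f a : ℚ) : ℝ)) = ((-T.inf' hT f : ℚ) : ℝ) := by
  obtain ⟨a, ha, hmin⟩ := exists_mem_eq_inf' hT f
  refine le_antisymm (sup'_le _ _ fun b hb => ?_) (le_sup'_of_le _ ha (by rw [hmin]))
  exact_mod_cast neg_le_neg (inf'_le f hb)

theorem valuation_inv_eq_mpInv_general (d : ℕ)
    (M : Matrix (Fin d) (Fin d) (HahnSeries ℚ ℂ))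
    (h0 : ∀ i j, M i j ≠ 0)
    (hG : Good (fun i j => (M i j).coeff (M i j).order)) :
    IsUnit M.det ∧
      ∀ i j, M⁻¹ i j ≠ 0 ∧
        ((-(HahnSeries.order (M⁻¹ i j)) : ℚ) : ℝ) =
          mpInv (fun a b : Fin d => ((-(M a b).order : ℚ) : ℝ)) i j := by
  have hL := hG.sum_sign_mul_prod_ne_zero
  simp only [← HahnSeries.leadingCoeff_eq] at hL
  have hdet := orderTop_det M h0 hL
  have hdet0 := HahnSeries.ne_zero_of_orderTop_eq_coe hdet
  refine ⟨hdet0.isUnit, fun i j => ?_⟩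
  have hadj := orderTop_adjugate_apply M h0 hL i j
  have hinv : M⁻¹ i j = M.det⁻¹ * M.adjugate i j := by
    rw [Matrix.inv_def, Matrix.smul_apply, smul_eq_mul, Ring.inverse_eq_inv']
  have hadj0 := HahnSeries.ne_zero_of_orderTop_eq_coe hadj
  refine ⟨hinv ▸ mul_ne_zero (inv_ne_zero hdet0) hadj0, ?_⟩
  rw [hinv, HahnSeries.order_mul (inv_ne_zero hdet0) hadj0, HahnSeries.order_inv hdet0,
    HahnSeries.order_eq_of_orderTop_eq_coe hdet, HahnSeries.order_eq_of_orderTop_eq_coe hadj]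
  have hperm := mpPerm_eq_sup'_perm fun a b : Fin d => ((-(M a b).order : ℚ) : ℝ)
  have hdel := mpPermDel_eq_sup'_perm (fun a b : Fin d => ((-(M a b).order : ℚ) : ℝ)) i j
  simp only [← Rat.cast_sum, sum_neg_distrib, sup'_ratCast_neg] at hperm hdel
  unfold mpInv
  rw [hperm, hdel]
  push_cast
  ring

/-- For a square matrix `M̃` over `K = HahnSeries ℚ ℂ` with all entries
nonzero and `L(M̃) ∈ G(d,d)`, the matrix is invertible, every entry of `M̃⁻¹` is nonzero,
and `V((M̃⁻¹)_{ij}) = (V(M̃)^{⊗-1})_{ij}`, i.e. the valuation of each entry of the inverse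
is given by the max-plus inverse of the valuation matrix. -/
theorem valuation_inv_eq_mpInv (d : ℕ) (hd : 1 ≤ d)
    (M : Matrix (Fin d) (Fin d) (HahnSeries ℚ ℂ))
    (h0 : ∀ i j, M i j ≠ 0)
    (hG : Good (fun i j => (M i j).coeff (M i j).order)) :
    IsUnit M.det ∧
      ∀ i j, M⁻¹ i j ≠ 0 ∧
        ((-(HahnSeries.order (M⁻¹ i j)) : ℚ) : ℝ) =
          mpInv (fun a b : Fin d => ((-(M a b).order : ℚ) : ℝ)) i j :=
  valuation_inv_eq_mpInv_general d M h0 hG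
end

section
/- Let B be an m×ℓ real matrix with m ≥ ℓ, let φ ∈ oas(B) be an optimal assignment, and let j_1,…,j_k be distinct elements of {1,…,ℓ} with k < ℓ. Then perm(B([φ(j_1),…,φ(j_k)]^c,[j_1,…,j_k]^c)) = ∑_{t ∈ {1,…,ℓ}, t ∉ {j_1,…,j_k}} B_{φ(t),t}; that is, the max-plus permanent of the submatrix obtained by deleting rows φ(j_1),…,φ(j_k) and columns j_1,…,j_k equals the weight of the restriction of φ to the remaining columns. -/
open scoped BigOperators

/-! If a reduced assignment `ψ` of the columns off `J` beat the restriction of `φ`, gluing `ψ`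
to `φ` on `J` would give an injection of all columns beating `φ`. -/

section MaxPlus

variable {ι κ : Type*} [Fintype ι] [Fintype κ]

theorem sum_le_mpPerm (A : Matrix κ ι ℝ) (ψ : ι ↪ κ) : ∑ j, A (ψ j) j ≤ mpPerm A :=
  le_ciSup (f := fun ψ : ι ↪ κ => ∑ j, A (ψ j) j) (Set.finite_range _).bddAbove ψ

theorem mem_oas_iff_forall_sum_le {A : Matrix κ ι ℝ} {φ : ι ↪ κ} :
    φ ∈ oas A ↔ ∀ ψ : ι ↪ κ, ∑ j, A (ψ j) j ≤ ∑ j, A (φ j) j := by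
  refine ⟨fun hφ ψ => hφ ▸ sum_le_mpPerm A ψ, fun h => le_antisymm (sum_le_mpPerm A φ) ?_⟩
  have : Nonempty (ι ↪ κ) := ⟨φ⟩
  exact ciSup_le h

end MaxPlus

namespace Function.Embedding

variable {ι κ : Type*} [DecidableEq ι] [DecidableEq κ]

def restrictCompl (φ : ι ↪ κ) (J : Finset ι) : {c // c ∉ J} ↪ {r // r ∉ J.image φ} where
  toFun c := ⟨φ c, by simpa using c.2⟩
  inj' _ _ h := Subtype.ext (φ.injective (congrArg Subtype.val h))

def extendCompl (φ : ι ↪ κ) (J : Finset ι) (ψ : {c // c ∉ J} ↪ {r // r ∉ J.image φ}) :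
    ι ↪ κ where
  toFun j := if h : j ∈ J then φ j else ψ ⟨j, h⟩
  inj' a b hab := by
    by_cases ha : a ∈ J <;> by_cases hb : b ∈ J <;>
      simp only [ha, hb, dite_true, dite_false] at hab
    · exact φ.injective hab
    · exact absurd (hab ▸ Finset.mem_image_of_mem φ ha) (ψ ⟨b, hb⟩).2
    · exact absurd (hab ▸ Finset.mem_image_of_mem φ hb) (ψ ⟨a, ha⟩).2
    · exact congrArg Subtype.val (ψ.injective (Subtype.ext hab))

theorem extendCompl_apply_of_mem (φ : ι ↪ κ) {J : Finset ι}
    (ψ : {c // c ∉ J} ↪ {r // r ∉ J.image φ}) {j : ι} (hj : j ∈ J) :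
    extendCompl φ J ψ j = φ j :=
  dif_pos hj

theorem extendCompl_apply_of_not_mem (φ : ι ↪ κ) {J : Finset ι}
    (ψ : {c // c ∉ J} ↪ {r // r ∉ J.image φ}) {j : ι} (hj : j ∉ J) :
    extendCompl φ J ψ j = ψ ⟨j, hj⟩ :=
  dif_neg hj

theorem extendCompl_restrictCompl (φ : ι ↪ κ) (J : Finset ι) :
    extendCompl φ J (restrictCompl φ J) = φ := by
  ext j
  by_cases hj : j ∈ J
  · exact extendCompl_apply_of_mem φ _ hj
  · exact extendCompl_apply_of_not_mem φ _ hj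

end Function.Embedding

open Function.Embedding

section Restriction

variable {ι κ : Type*} [Fintype ι] [DecidableEq ι] [DecidableEq κ]

theorem sum_extendCompl (A : Matrix κ ι ℝ) (φ : ι ↪ κ) (J : Finset ι)
    (ψ : {c // c ∉ J} ↪ {r // r ∉ J.image φ}) :
    ∑ j, A (extendCompl φ J ψ j) j = ∑ j ∈ J, A (φ j) j + ∑ j, A (ψ j) j := by
  rw [← Finset.sum_add_sum_compl J, Finset.sum_subtype Jᶜ fun _ => Finset.mem_compl]
  congr 1
  · exact Finset.sum_congr rfl fun j hj => by rw [extendCompl_apply_of_mem φ ψ hj]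
  · exact Fintype.sum_congr _ _ fun j => by rw [extendCompl_apply_of_not_mem φ ψ j.2]

theorem restrictCompl_mem_oas [Fintype κ] {A : Matrix κ ι ℝ} {φ : ι ↪ κ} (hφ : φ ∈ oas A)
    (J : Finset ι) :
    restrictCompl φ J ∈ oas (A.submatrix (fun r : {r // r ∉ J.image φ} => (r : κ))
      (fun c : {c // c ∉ J} => (c : ι))) := by
  refine mem_oas_iff_forall_sum_le.2 fun ψ => ?_
  have h := mem_oas_iff_forall_sum_le.1 hφ (extendCompl φ J ψ)
  rw [← congrArg (fun χ : ι ↪ κ => ∑ j, A (χ j) j) (extendCompl_restrictCompl φ J),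
    sum_extendCompl, sum_extendCompl] at h
  exact le_of_add_le_add_left h

end Restriction

theorem mpPerm_delete_assigned_general (m l : ℕ)
    (B : Matrix (Fin m) (Fin l) ℝ) (φ : Fin l ↪ Fin m) (hφ : φ ∈ oas B)
    (J : Finset (Fin l)) :
    mpPerm (B.submatrix (fun r : {r : Fin m // r ∉ J.image φ} => (r : Fin m))
                        (fun c : {c : Fin l // c ∉ J} => (c : Fin l))) =
      ∑ t ∈ Jᶜ, B (φ t) t := by
  rw [← restrictCompl_mem_oas hφ J]
  exact (Finset.sum_subtype Jᶜ (fun _ => Finset.mem_compl) fun t => B (φ t) t).symm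

/-- If `φ` is an optimal assignment of an `m×ℓ` max-plus matrix `B`
(`m ≥ ℓ`) and `J` is a set of fewer than `ℓ` columns, then the max-plus permanent of the
submatrix obtained by deleting the rows `φ(J)` and the columns `J` equals the weight of
the restriction of `φ` to the remaining columns. -/
theorem mpPerm_delete_assigned (m l : ℕ) (hml : l ≤ m)
    (B : Matrix (Fin m) (Fin l) ℝ) (φ : Fin l ↪ Fin m) (hφ : φ ∈ oas B)
    (J : Finset (Fin l)) (hJ : J.card < l) :
    mpPerm (B.submatrix (fun r : {r : Fin m // r ∉ J.image φ} => (r : Fin m))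
                        (fun c : {c : Fin l // c ∉ J} => (c : Fin l))) =
      ∑ t ∈ Jᶜ, B (φ t) t :=
  mpPerm_delete_assigned_general m l B φ hφ J
end
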